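/- arXiv:math/0001029 — 4 statements merged into one kernel-verified Lean document; each statement's English description precedes it below -/
import Mathlib

section
/- Let Λ be a full-rank lattice in Euclidean space ℝ^d (with the standard inner product) that is integral and self-dual, i.e. Λ = {x ∈ ℝ^d : ⟨x,λ⟩ ∈ ℤ for all λ ∈ Λ}. Let L be a subgroup of Λ satisfying Λ ∩ span_ℝ(L) = L, and let π_L : ℝ^d → span_ℝ(L) denote the orthogonal projection onto the real span of L. Then the dual lattice L* := {x ∈ span_ℝ(L) : ⟨x,ℓ⟩ ∈ ℤ for all ℓ ∈ L} is exactly the image π_L(Λ). -/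
/-- Let `Λ` be a full-rank, integral, self-dual lattice in Euclidean space
`ℝ^d`, and let `L` be a subgroup of `Λ` with `Λ ∩ span_ℝ(L) = L`.  Then the dual lattice
`L* = {x ∈ span_ℝ(L) | ⟨x, ℓ⟩ ∈ ℤ for all ℓ ∈ L}` is exactly the image of `Λ` under the
orthogonal projection onto `span_ℝ(L)`. -/
theorem dual_lattice_eq_projection_image
    (d : ℕ) (Λ L : AddSubgroup (EuclideanSpace ℝ (Fin d)))
    (hdisc : DiscreteTopology Λ)
    (hfull : Submodule.span ℝ (Λ : Set (EuclideanSpace ℝ (Fin d))) = ⊤)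
    (hselfdual : (Λ : Set (EuclideanSpace ℝ (Fin d))) =
      {x : EuclideanSpace ℝ (Fin d) | ∀ l ∈ Λ, ∃ m : ℤ, (inner ℝ x l : ℝ) = m})
    (hLΛ : L ≤ Λ)
    (hcap : (Λ : Set (EuclideanSpace ℝ (Fin d))) ∩
        (Submodule.span ℝ (L : Set (EuclideanSpace ℝ (Fin d))) :
          Set (EuclideanSpace ℝ (Fin d))) =
      (L : Set (EuclideanSpace ℝ (Fin d)))) :
    {x : EuclideanSpace ℝ (Fin d) |
      x ∈ Submodule.span ℝ (L : Set (EuclideanSpace ℝ (Fin d))) ∧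
      ∀ l ∈ L, ∃ m : ℤ, (inner ℝ x l : ℝ) = m} =
    (fun x : EuclideanSpace ℝ (Fin d) =>
      (Submodule.orthogonalProjection (Submodule.span ℝ (L : Set (EuclideanSpace ℝ (Fin d)))) x :
        EuclideanSpace ℝ (Fin d))) '' (Λ : Set (EuclideanSpace ℝ (Fin d))) := by
  classical
  set E := EuclideanSpace ℝ (Fin d)
  set V : Submodule ℝ E := Submodule.span ℝ (L : Set E) with hV
  have hLV : (L : Set E) ⊆ (V : Set E) := Submodule.subset_span
  -- set up the ℤ-lattice structure
  letI Λ' : Submodule ℤ E := AddSubgroup.toIntSubmodule Λ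
  haveI : DiscreteTopology Λ' := hdisc
  haveI : IsZLattice ℝ Λ' := ⟨by rwa [AddSubgroup.coe_toIntSubmodule]⟩
  haveI := ZLattice.module_free ℝ Λ'
  haveI := ZLattice.module_finite ℝ Λ'
  -- L as a submodule of Λ'
  letI L'' : Submodule ℤ Λ' := (AddSubgroup.toIntSubmodule L).comap Λ'.subtype
  have memL'' : ∀ z : Λ', z ∈ L'' ↔ (z : E) ∈ L := fun z => Iff.rfl
  -- the quotient is torsion-free
  haveI : NoZeroSMulDivisors ℤ (Λ' ⧸ L'') := by
    refine ⟨fun {n q} h => ?_⟩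
    by_cases hn : n = 0
    · exact Or.inl hn
    · right
      obtain ⟨z, rfl⟩ := Submodule.Quotient.mk_surjective L'' q
      rw [← Submodule.Quotient.mk_smul, Submodule.Quotient.mk_eq_zero] at h
      rw [Submodule.Quotient.mk_eq_zero]
      have hnzL : ((n • z : Λ') : E) ∈ L := (memL'' _).1 h
      have hcoe : ((n • z : Λ') : E) = (n : ℝ) • (z : E) := by
        push_cast [Int.cast_smul_eq_zsmul]; rfl
      have h1 : ((n : ℝ) • (z : E)) ∈ V := by rw [← hcoe]; exact hLV hnzL
      have h2 : (z : E) ∈ V := by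
        have := V.smul_mem ((n : ℝ)⁻¹) h1
        rwa [inv_smul_smul₀ (by exact_mod_cast hn)] at this
      have : (z : E) ∈ (Λ : Set E) ∩ (V : Set E) := ⟨z.2, h2⟩
      rw [hcap] at this
      exact (memL'' _).2 this
  haveI : Module.Finite ℤ (Λ' ⧸ L'') := Module.Finite.quotient ℤ L''
  haveI : Module.Free ℤ (Λ' ⧸ L'') := Module.free_of_finite_type_torsion_free'
  -- splitting of the quotient map
  obtain ⟨s, hs⟩ := Module.projective_lifting_property L''.mkQ (LinearMap.id)
    (Submodule.Quotient.mk_surjective L'')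
  letI ρ : Λ' →ₗ[ℤ] Λ' := LinearMap.id - s ∘ₗ L''.mkQ
  have hρmem : ∀ z : Λ', ρ z ∈ L'' := by
    intro z
    have : L''.mkQ (ρ z) = 0 := by
      simp only [ρ, LinearMap.sub_apply, LinearMap.id_apply, LinearMap.comp_apply, map_sub]
      have := congrArg (fun f => f (L''.mkQ z)) hs
      simp only [LinearMap.comp_apply, LinearMap.id_apply] at this
      rw [this, sub_self]
    rwa [← Submodule.Quotient.mk_eq_zero]
  have hρL : ∀ z : Λ', (z : E) ∈ L → ρ z = z := by
    intro z hz
    have h0 : L''.mkQ z = 0 := by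
      rw [Submodule.mkQ_apply, Submodule.Quotient.mk_eq_zero]
      exact (memL'' z).2 hz
    simp [ρ, h0]
  ext x
  simp only [Set.mem_setOf_eq, Set.mem_image]
  constructor
  · rintro ⟨hxV, hxint⟩
    -- the integer-valued functional
    letI h : Λ' →ₗ[ℤ] ℝ :=
      ((innerSL ℝ x).toLinearMap.restrictScalars ℤ) ∘ₗ (Λ'.subtype ∘ₗ ρ)
    have hval : ∀ z : Λ', ∃ m : ℤ, h z = m := by
      intro z
      exact hxint _ ((memL'' _).1 (hρmem z))
    have hL : ∀ z : Λ', (z : E) ∈ L → h z = inner ℝ x (z : E) := by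
      intro z hz
      simp only [h, LinearMap.comp_apply, LinearMap.coe_restrictScalars,
        ContinuousLinearMap.coe_coe, Submodule.coe_subtype, hρL z hz]
      rfl
    -- extend to an ℝ-linear functional
    obtain ⟨ι, b⟩ := Module.Free.exists_basis (R := ℤ) (M := Λ')
    haveI : Finite ι := Module.Finite.finite_basis b
    letI b' := b.ofZLatticeBasis ℝ Λ'
    letI φ : E →ₗ[ℝ] ℝ := b'.constr ℝ (fun i => h (b i))
    have hφ : ∀ z : Λ', φ (z : E) = h z := by
      have : (φ.restrictScalars ℤ) ∘ₗ Λ'.subtype = h := by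
        refine b.ext fun i => ?_
        simp only [LinearMap.comp_apply, LinearMap.coe_restrictScalars, Submodule.coe_subtype]
        rw [← b.ofZLatticeBasis_apply ℝ]
        exact b'.constr_basis ℝ _ i
      intro z
      have := congrArg (fun f => f z) this
      simpa using this
    -- Riesz representative
    letI y : E := (InnerProductSpace.toDual ℝ E).symm (LinearMap.toContinuousLinearMap φ)
    have hy : ∀ z : E, (inner ℝ y z : ℝ) = φ z := by
      intro z
      exact InnerProductSpace.toDual_symm_apply
    have hyΛ : y ∈ Λ := by
      have : y ∈ (Λ : Set E) := by
        rw [hselfdual]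
        intro l hl
        have hl' : l ∈ Λ' := hl
        obtain ⟨m, hm⟩ := hval ⟨l, hl'⟩
        exact ⟨m, by rw [hy, hφ ⟨l, hl'⟩]; exact hm⟩
      exact this
    refine ⟨y, hyΛ, ?_⟩
    refine Submodule.eq_starProjection_of_mem_of_inner_eq_zero hxV ?_
    intro w hw
    have hker : V ≤ LinearMap.ker ((innerSL ℝ (y - x)).toLinearMap) := by
      rw [hV, Submodule.span_le]
      intro l hl
      have hlΛ : l ∈ Λ' := hLΛ hl
      have hlL : (l : E) ∈ L := hl
      simp only [SetLike.mem_coe, LinearMap.mem_ker, ContinuousLinearMap.coe_coe, innerSL_apply_apply]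
      rw [inner_sub_left, hy, hφ ⟨l, hlΛ⟩, hL ⟨l, hlΛ⟩ hlL, sub_self]
    have := hker hw
    simp only [LinearMap.mem_ker, ContinuousLinearMap.coe_coe, innerSL_apply_apply] at this
    exact this
  · rintro ⟨l, hl, rfl⟩
    refine ⟨Submodule.coe_mem _, ?_⟩
    intro z hz
    have hlin : ∀ w ∈ Λ, ∃ m : ℤ, (inner ℝ l w : ℝ) = m := by
      have : l ∈ {x : E | ∀ w ∈ Λ, ∃ m : ℤ, (inner ℝ x w : ℝ) = m} := hselfdual ▸ hl
      exact this
    obtain ⟨m, hm⟩ := hlin z (hLΛ hz)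
    refine ⟨m, ?_⟩
    have h1 : l - (Submodule.orthogonalProjection V l : E) ∈ Vᗮ := V.sub_starProjection_mem_orthogonal l
    have h2 : (inner ℝ z (l - (Submodule.orthogonalProjection V l : E)) : ℝ) = 0 := h1 z (hLV hz)
    rw [inner_sub_right] at h2
    have h4 : (inner ℝ z ((Submodule.orthogonalProjection V l : E)) : ℝ) = inner ℝ z l := by linarith
    calc (inner ℝ ((Submodule.orthogonalProjection V l : E)) z : ℝ)
        = inner ℝ z ((Submodule.orthogonalProjection V l : E)) := real_inner_comm _ _
      _ = inner ℝ z l := h4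
      _ = inner ℝ l z := real_inner_comm _ _
      _ = m := hm
end

section
/- Let L be a positive-definite even integral lattice of full rank l in ℝ^l, let N be an odd prime with N·L* ⊆ L, and suppose L*/L ≅ (ℤ/Nℤ)^n. Then l is even; moreover, if N ≡ 1 (mod 4) then l ≡ 0 (mod 4), and if N ≡ 3 (mod 4) then n ≡ l/2 (mod 2). -/
/-- `x` is "even" in `ZMod 4`. -/
def EvFour (x : ZMod 4) : Prop := x = 0 ∨ x = 2

instance : DecidablePred EvFour := fun x => inferInstanceAs (Decidable (x = 0 ∨ x = 2))

lemma evFour_add {x y : ZMod 4} : EvFour x → EvFour y → EvFour (x + y) :=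
  (by decide : ∀ x y : ZMod 4, EvFour x → EvFour y → EvFour (x + y)) x y
lemma evFour_sub {x y : ZMod 4} : EvFour x → EvFour y → EvFour (x - y) :=
  (by decide : ∀ x y : ZMod 4, EvFour x → EvFour y → EvFour (x - y)) x y
lemma evFour_neg {x : ZMod 4} : EvFour x → EvFour (-x) :=
  (by decide : ∀ x : ZMod 4, EvFour x → EvFour (-x)) x
lemma evFour_mul (y : ZMod 4) {x : ZMod 4} : EvFour x → EvFour (x * y) :=
  (by decide : ∀ x y : ZMod 4, EvFour x → EvFour (x * y)) x y
lemma evFour_two_mul (x : ZMod 4) : EvFour (2 * x) :=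
  (by decide : ∀ x : ZMod 4, EvFour (2 * x)) x
lemma evFour_mul_evFour {x y : ZMod 4} : EvFour x → EvFour y → x * y = 0 :=
  (by decide : ∀ x y : ZMod 4, EvFour x → EvFour y → x * y = 0) x y
lemma not_evFour_sq {x : ZMod 4} : ¬ EvFour x → x * x = 1 :=
  (by decide : ∀ x : ZMod 4, ¬ EvFour x → x * x = 1) x

lemma evFour_not_unit {x : ZMod 4} (h : EvFour x) : ¬ IsUnit x := by
  intro hu
  have h2 : IsUnit (x * x) := hu.mul hu
  rw [evFour_mul_evFour h h] at h2
  rw [isUnit_zero_iff] at h2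
  exact (by decide : (0 : ZMod 4) ≠ 1) h2

/-- Key determinant lemma: a symmetric matrix over `ZMod 4` with even diagonal and unit
determinant has even size and determinant `(-1)^(l/2)`. -/
lemma det_symm_even_diag : ∀ l : ℕ, ∀ A : Matrix (Fin l) (Fin l) (ZMod 4),
    (∀ i j, A i j = A j i) → (∀ i, EvFour (A i i)) → IsUnit A.det →
    Even l ∧ A.det = (-1) ^ (l / 2) := by
  intro l
  induction l using Nat.strong_induction_on with
  | _ l IH =>
  intro A hsym hdiag hunit
  match l, A, hsym, hdiag, hunit, IH with
  | 0, A, hsym, hdiag, hunit, IH =>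
      refine ⟨Even.zero, ?_⟩
      simp [Matrix.det_fin_zero]
  | 1, A, hsym, hdiag, hunit, IH =>
      exfalso
      rw [Matrix.det_fin_one] at hunit
      exact evFour_not_unit (hdiag 0) hunit
  | (m + 2), A, hsym, hdiag, hunit, IH =>
  -- find an odd off-diagonal entry
  have h01 : (0 : Fin (m + 2)) ≠ 1 := by simp [Fin.ext_iff]
  have hex : ∃ i j, ¬ EvFour (A i j) ∧ i ≠ j := by
    by_contra hc
    push_neg at hc
    have hall : ∀ i j, EvFour (A i j) := by
      intro i j
      by_cases h : i = j
      · subst h; exact hdiag i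
      · by_contra he; exact h (hc i j he)
    have h0 : A.det = 0 := by
      rw [Matrix.det_apply]
      apply Finset.sum_eq_zero
      intro σ _
      have hp : (∏ i, A (σ i) i) = 0 := by
        rw [← Finset.mul_prod_erase Finset.univ _ (Finset.mem_univ (0 : Fin (m + 2))),
          ← Finset.mul_prod_erase _ _
            (Finset.mem_erase.mpr ⟨h01.symm, Finset.mem_univ (1 : Fin (m + 2))⟩),
          ← mul_assoc, evFour_mul_evFour (hall _ _) (hall _ _), zero_mul]
      rw [hp, smul_zero]
    rw [h0] at hunit
    exact evFour_not_unit (Or.inl rfl) hunit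
  obtain ⟨i, j, hodd, hij⟩ := hex
  -- a permutation sending 0 ↦ i, 1 ↦ j
  have hj' : (Equiv.swap (0 : Fin (m + 2)) i).symm j ≠ 0 := by
    intro h
    apply hij.symm
    have := congrArg (Equiv.swap (0 : Fin (m + 2)) i) h
    simpa using this
  set e : Fin (m + 2) ≃ Fin (m + 2) :=
    (Equiv.swap (1 : Fin (m + 2)) ((Equiv.swap (0 : Fin (m + 2)) i).symm j)).trans
      (Equiv.swap (0 : Fin (m + 2)) i) with he
  have he0 : e 0 = i := by
    rw [he]
    simp only [Equiv.trans_apply]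
    rw [Equiv.swap_apply_of_ne_of_ne h01 (Ne.symm hj')]
    simp
  have he1 : e 1 = j := by
    rw [he]
    simp only [Equiv.trans_apply]
    rw [Equiv.swap_apply_left]
    simp
  set B := A.submatrix e e with hB
  have hdetB : B.det = A.det := Matrix.det_submatrix_equiv_self e A
  have hBsym : ∀ p q, B p q = B q p := fun p q => hsym _ _
  have hBdiag : ∀ p, EvFour (B p p) := fun p => hdiag _
  have hB01 : ¬ EvFour (B 0 1) := by rw [hB]; simpa [Matrix.submatrix_apply, he0, he1] using hodd
  -- block structure
  set κ : (Fin 2 ⊕ Fin m) ≃ Fin (m + 2) := finSumFinEquiv.trans (finCongr (by omega)) with hκ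
  set C := B.submatrix κ κ with hC
  have hdetC : C.det = B.det := Matrix.det_submatrix_equiv_self κ B
  have hκ0 : κ (Sum.inl 0) = 0 := by
    rw [hκ]; apply Fin.ext; simp
  have hκ1 : κ (Sum.inl 1) = 1 := by
    rw [hκ]; apply Fin.ext; simp
  have hCsym : ∀ p q, C p q = C q p := fun p q => hBsym _ _
  set P := C.toBlocks₁₁ with hP
  have hPa : ∀ a b : Fin 2, P a b = C (Sum.inl a) (Sum.inl b) := fun a b => rfl
  have hP00 : EvFour (P 0 0) := by rw [hPa, hC, Matrix.submatrix_apply, hκ0]; exact hBdiag 0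
  have hP11 : EvFour (P 1 1) := by rw [hPa, hC, Matrix.submatrix_apply, hκ1]; exact hBdiag 1
  have hP01 : ¬ EvFour (P 0 1) := by
    rw [hPa, hC, Matrix.submatrix_apply, hκ0, hκ1]; exact hB01
  have hP10 : P 1 0 = P 0 1 := by rw [hPa, hPa]; exact hCsym _ _
  have hdetPd : P 0 0 * P 1 1 - P 0 1 * P 1 0 = -1 := by
    rw [evFour_mul_evFour hP00 hP11, hP10, not_evFour_sq hP01]
    ring
  have hdetP : P.det = -1 := by rw [Matrix.det_fin_two]; exact hdetPd
  set Q : Matrix (Fin 2) (Fin 2) (ZMod 4) := !![-(P 1 1), P 0 1; P 1 0, -(P 0 0)] with hQ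
  have hQ00 : Q 0 0 = -(P 1 1) := by rw [hQ]; simp
  have hQ01 : Q 0 1 = P 0 1 := by rw [hQ]; simp
  have hQ10 : Q 1 0 = P 1 0 := by rw [hQ]; simp
  have hQ11 : Q 1 1 = -(P 0 0) := by rw [hQ]; simp
  have hPQ : P * Q = 1 := by
    ext a b
    fin_cases a <;> fin_cases b <;>
      simp [Matrix.mul_apply, Fin.sum_univ_two, Matrix.one_fin_two]
    · linear_combination P 0 0 * hQ00 + P 0 1 * hQ10 - hdetPd
    · linear_combination P 0 0 * hQ01 + P 0 1 * hQ11
    · linear_combination P 1 0 * hQ00 + P 1 1 * hQ10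
    · linear_combination P 1 0 * hQ01 + P 1 1 * hQ11 - hdetPd
  have hQP : Q * P = 1 := by
    ext a b
    fin_cases a <;> fin_cases b <;>
      simp [Matrix.mul_apply, Fin.sum_univ_two, Matrix.one_fin_two]
    · linear_combination P 0 0 * hQ00 + P 1 0 * hQ01 - hdetPd
    · linear_combination P 0 1 * hQ00 + P 1 1 * hQ01
    · linear_combination P 0 0 * hQ10 + P 1 0 * hQ11
    · linear_combination P 0 1 * hQ10 + P 1 1 * hQ11 - hdetPd
  haveI hPinv : Invertible P := ⟨Q, hQP, hPQ⟩
  have hinvP : ⅟P = Q := invOf_eq_right_inv hPQ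
  have hdetCP : C.det = P.det * (C.toBlocks₂₂ - C.toBlocks₂₁ * Q * C.toBlocks₁₂).det := by
    rw [← hinvP]
    conv_lhs => rw [← Matrix.fromBlocks_toBlocks C]
    exact Matrix.det_fromBlocks₁₁ _ _ _ _
  set S : Matrix (Fin m) (Fin m) (ZMod 4) :=
    C.toBlocks₂₂ - C.toBlocks₂₁ * Q * C.toBlocks₁₂ with hSdef
  have hS : ∀ a b, S a b = C (Sum.inr a) (Sum.inr b)
      - (C (Sum.inr a) (Sum.inl 0) * Q 0 0 * C (Sum.inl 0) (Sum.inr b)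
       + C (Sum.inr a) (Sum.inl 1) * Q 1 0 * C (Sum.inl 0) (Sum.inr b)
       + C (Sum.inr a) (Sum.inl 0) * Q 0 1 * C (Sum.inl 1) (Sum.inr b)
       + C (Sum.inr a) (Sum.inl 1) * Q 1 1 * C (Sum.inl 1) (Sum.inr b)) := by
    intro a b
    rw [hSdef]
    simp only [Matrix.sub_apply, Matrix.mul_apply, Fin.sum_univ_two,
      Matrix.toBlocks₁₂, Matrix.toBlocks₂₁, Matrix.toBlocks₂₂, Matrix.of_apply]
    ring
  have hQsym : Q 0 1 = Q 1 0 := by rw [hQ01, hQ10, hP10]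
  have hSsym : ∀ a b, S a b = S b a := by
    intro a b
    rw [hS a b, hS b a, hCsym (Sum.inr a) (Sum.inr b), hCsym (Sum.inl 0) (Sum.inr b),
      hCsym (Sum.inl 1) (Sum.inr b), hCsym (Sum.inl 0) (Sum.inr a), hCsym (Sum.inl 1) (Sum.inr a)]
    linear_combination (C (Sum.inr a) (Sum.inl 1) * C (Sum.inr b) (Sum.inl 0)
      - C (Sum.inr a) (Sum.inl 0) * C (Sum.inr b) (Sum.inl 1)) * hQsym
  have hSdiag : ∀ a, EvFour (S a a) := by
    intro a
    rw [hS a a, hCsym (Sum.inl 0) (Sum.inr a), hCsym (Sum.inl 1) (Sum.inr a)]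
    have hrw : C (Sum.inr a) (Sum.inl 0) * Q 0 0 * C (Sum.inr a) (Sum.inl 0)
       + C (Sum.inr a) (Sum.inl 1) * Q 1 0 * C (Sum.inr a) (Sum.inl 0)
       + C (Sum.inr a) (Sum.inl 0) * Q 0 1 * C (Sum.inr a) (Sum.inl 1)
       + C (Sum.inr a) (Sum.inl 1) * Q 1 1 * C (Sum.inr a) (Sum.inl 1)
       = Q 0 0 * (C (Sum.inr a) (Sum.inl 0) * C (Sum.inr a) (Sum.inl 0))
       + Q 1 1 * (C (Sum.inr a) (Sum.inl 1) * C (Sum.inr a) (Sum.inl 1))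
       + 2 * (Q 0 1 * (C (Sum.inr a) (Sum.inl 0) * C (Sum.inr a) (Sum.inl 1))) := by
      linear_combination (C (Sum.inr a) (Sum.inl 0) * C (Sum.inr a) (Sum.inl 1)) * hQsym.symm
    rw [hrw]
    have hQ00ev : EvFour (Q 0 0) := by rw [hQ00]; exact evFour_neg hP11
    have hQ11ev : EvFour (Q 1 1) := by rw [hQ11]; exact evFour_neg hP00
    have hCaa : EvFour (C (Sum.inr a) (Sum.inr a)) := hBdiag _
    exact evFour_sub hCaa
      (evFour_add (evFour_add (evFour_mul _ hQ00ev) (evFour_mul _ hQ11ev)) (evFour_two_mul _))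
  have hdetS : IsUnit S.det := by
    have : IsUnit (P.det * S.det) := by
      rw [← hdetCP, hdetC, hdetB]; exact hunit
    exact isUnit_of_mul_isUnit_right this
  obtain ⟨hm_even, hm_det⟩ := IH m (by omega) S hSsym hSdiag hdetS
  constructor
  · rcases hm_even with ⟨k, hk⟩; exact ⟨k + 1, by omega⟩
  · have hdiv : (m + 2) / 2 = m / 2 + 1 := by omega
    rw [← hdetB, ← hdetC, hdetCP, hdetP, hm_det, hdiv, pow_succ]
    ring


lemma index_range_eq_natAbs_det {l : ℕ} (f : (Fin l → ℤ) →ₗ[ℤ] (Fin l → ℤ))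
    (hf : Function.Injective f) :
    (LinearMap.range f).toAddSubgroup.index = (LinearMap.det f).natAbs := by
  classical
  set N : Submodule ℤ (Fin l → ℤ) := LinearMap.range f with hN
  obtain ⟨n, snf⟩ := N.smithNormalForm (Pi.basisFun ℤ (Fin l))
  set fIso : (Fin l → ℤ) ≃ₗ[ℤ] N := LinearEquiv.ofInjective f hf with hfIso
  have hnl : n = l := by
    have h1 : Module.finrank ℤ N = l := by
      rw [← LinearEquiv.finrank_eq fIso, Module.finrank_pi]
      simp
    have h2 : Module.finrank ℤ N = n := Module.finrank_eq_card_basis snf.bN |>.trans (by simp)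
    omega
  subst hnl
  -- the reindexing equivalence
  have hfbij : Function.Bijective snf.f :=
    (Fintype.bijective_iff_injective_and_card snf.f).2 ⟨snf.f.injective, by simp⟩
  set feq : Fin n ≃ Fin n := Equiv.ofBijective snf.f hfbij with hfeq
  have hfeqa : ∀ i, feq i = snf.f i := fun i => rfl
  set equivH : (Fin n → ℤ) ≃ₗ[ℤ] N := snf.bM.equiv (snf.bN.reindex feq) (Equiv.refl _) with hequivH
  set h : (Fin n → ℤ) →ₗ[ℤ] (Fin n → ℤ) := N.subtype ∘ₗ (equivH : (Fin n → ℤ) →ₗ[ℤ] N) with hh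
  have hhb : ∀ j, h (snf.bM j) = snf.a (feq.symm j) • snf.bM j := by
    intro j
    rw [hh]
    simp only [LinearMap.coe_comp, Function.comp_apply, LinearEquiv.coe_coe, hequivH,
      Module.Basis.equiv_apply, Equiv.refl_apply, Module.Basis.reindex_apply]
    have := snf.snf (feq.symm j)
    rw [Submodule.coe_subtype, this]
    congr 1
    rw [← hfeqa, Equiv.apply_symm_apply]
  have hmat : LinearMap.toMatrix snf.bM snf.bM h
      = Matrix.diagonal (fun j => snf.a (feq.symm j)) := by
    ext i j
    rw [LinearMap.toMatrix_apply, hhb j, map_smul, Module.Basis.repr_self]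
    by_cases hij : i = j
    · subst hij; simp
    · simp [Matrix.diagonal_apply_ne _ (Ne.symm (Ne.intro hij) |>.symm), Finsupp.single_apply,
        Ne.symm hij, hij]
  have hdeth : LinearMap.det h = ∏ i, snf.a i := by
    rw [← LinearMap.det_toMatrix snf.bM, hmat, Matrix.det_diagonal]
    exact Equiv.prod_comp feq.symm snf.a
  have hfu : f = h ∘ₗ ((fIso.trans equivH.symm : (Fin n → ℤ) ≃ₗ[ℤ] (Fin n → ℤ)) :
      (Fin n → ℤ) →ₗ[ℤ] (Fin n → ℤ)) := by
    ext x j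
    simp only [LinearMap.coe_comp, Function.comp_apply, LinearEquiv.coe_coe,
      LinearEquiv.trans_apply, hh]
    rw [LinearEquiv.apply_symm_apply, hfIso]
    rw [Submodule.coe_subtype, LinearEquiv.ofInjective_apply]
  have hdetf : (LinearMap.det f).natAbs = (∏ i, snf.a i).natAbs := by
    rw [hfu, LinearMap.det_comp, ← hdeth]
    have hu : IsUnit (LinearMap.det ((fIso.trans equivH.symm :
        (Fin n → ℤ) ≃ₗ[ℤ] (Fin n → ℤ)) : (Fin n → ℤ) →ₗ[ℤ] (Fin n → ℤ))) :=
      LinearEquiv.isUnit_det' _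
    rcases Int.isUnit_iff.mp hu with h1 | h1 <;> rw [h1] <;> simp [Int.natAbs_mul]
  rw [hdetf]
  rw [snf.toAddSubgroup_index_eq_pow_mul_prod]
  simp only [Fintype.card_fin, Nat.sub_self, pow_zero, one_mul]
  have : (∏ i : Fin n, snf.a i).natAbs = ∏ i : Fin n, (snf.a i).natAbs :=
    map_prod Int.natAbsHom snf.a Finset.univ
  rw [this]
  apply Finset.prod_congr rfl
  intro i _
  rw [Ideal.span_singleton_toAddSubgroup_eq_zmultiples, Int.index_zmultiples]

/-- The dual basis with respect to the inner product. -/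
lemma exists_inner_dual_basis {l : ℕ} (b : Module.Basis (Fin l) ℝ (EuclideanSpace ℝ (Fin l))) :
    ∃ d : Module.Basis (Fin l) ℝ (EuclideanSpace ℝ (Fin l)),
      ∀ (x : EuclideanSpace ℝ (Fin l)) (i : Fin l), d.repr x i = inner ℝ x (b i) := by
  classical
  set E := EuclideanSpace ℝ (Fin l)
  set T : E →ₗ[ℝ] (Fin l → ℝ) :=
    { toFun := fun x => fun i => inner ℝ x (b i)
      map_add' := fun x y => by ext i; simp [inner_add_left]
      map_smul' := fun c x => by ext i; simp [real_inner_smul_left] } with hT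
  have hTinj : Function.Injective T := by
    rw [← LinearMap.ker_eq_bot, Submodule.eq_bot_iff]
    intro x hx
    have hx' : ∀ i, (inner ℝ x (b i) : ℝ) = 0 := fun i => congrFun hx i
    have hzero : ∀ y : E, (inner ℝ x y : ℝ) = 0 := by
      intro y
      have hy := Module.Basis.sum_repr b y
      rw [← hy, inner_sum]
      simp [real_inner_smul_right, hx']
    have := hzero x
    rwa [inner_self_eq_zero] at this
  have hdim : Module.finrank ℝ E = Module.finrank ℝ (Fin l → ℝ) := by
    simp only [E, finrank_euclideanSpace, Fintype.card_fin, Module.finrank_pi]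
  set eqv : E ≃ₗ[ℝ] (Fin l → ℝ) := LinearMap.linearEquivOfInjective T hTinj hdim with heqv
  have heqva : ∀ x, eqv x = T x := fun x => rfl
  refine ⟨(Pi.basisFun ℝ (Fin l)).map eqv.symm, fun x i => ?_⟩
  rw [Module.Basis.map_repr]
  simp only [LinearEquiv.trans_apply, LinearEquiv.symm_symm]
  rw [heqva]
  simp [Pi.basisFun_repr]
  rfl

/-- Let `L` be a positive-definite even integral lattice of full rank `l` in
`ℝ^l`, let `N` be an odd prime with `N·L* ⊆ L`, and suppose `L*/L ≅ (ℤ/Nℤ)^n`.  Then `l` is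
even; moreover if `N ≡ 1 (mod 4)` then `l ≡ 0 (mod 4)`, and if `N ≡ 3 (mod 4)` then
`n ≡ l/2 (mod 2)`. -/
theorem even_rank_and_congruences
    (l : ℕ) (L : AddSubgroup (EuclideanSpace ℝ (Fin l)))
    (b : Module.Basis (Fin l) ℝ (EuclideanSpace ℝ (Fin l)))
    (hLb : L = AddSubgroup.closure (Set.range b))
    (hint : ∀ x ∈ L, ∀ y ∈ L, ∃ m : ℤ, (inner ℝ x y : ℝ) = m)
    (heven : ∀ x ∈ L, ∃ m : ℤ, (inner ℝ x x : ℝ) = 2 * m)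
    (N : ℕ) (hN : N.Prime) (hNodd : Odd N)
    (dual : AddSubgroup (EuclideanSpace ℝ (Fin l)))
    (hdual : (dual : Set (EuclideanSpace ℝ (Fin l))) =
      {x : EuclideanSpace ℝ (Fin l) | ∀ y ∈ L, ∃ m : ℤ, (inner ℝ x y : ℝ) = m})
    (hNd : ∀ x ∈ dual, N • x ∈ L)
    (n : ℕ)
    (hiso : Nonempty ((↥dual ⧸ L.addSubgroupOf dual) ≃+ (Fin n → ZMod N))) :
    Even l ∧ (N % 4 = 1 → l % 4 = 0) ∧ (N % 4 = 3 → n % 2 = (l / 2) % 2) := by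
  classical
  obtain ⟨d, hd⟩ := exists_inner_dual_basis b
  have hbL : ∀ i, b i ∈ L := by
    intro i; rw [hLb]; exact AddSubgroup.subset_closure ⟨i, rfl⟩
  have hGex : ∀ i j, ∃ m : ℤ, (inner ℝ (b i) (b j) : ℝ) = m :=
    fun i j => hint (b i) (hbL i) (b j) (hbL j)
  set G : Matrix (Fin l) (Fin l) ℤ := fun i j => (hGex i j).choose with hGdef
  have hG : ∀ i j, ((G i j : ℤ) : ℝ) = inner ℝ (b i) (b j) := fun i j => ((hGex i j).choose_spec).symm
  have hGsym : ∀ i j, G i j = G j i := by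
    intro i j
    have h1 : ((G i j : ℤ) : ℝ) = ((G j i : ℤ) : ℝ) := by rw [hG, hG, real_inner_comm]
    exact_mod_cast h1
  have hGeven : ∀ i, ∃ m : ℤ, G i i = 2 * m := by
    intro i
    obtain ⟨m, hm⟩ := heven (b i) (hbL i)
    refine ⟨m, ?_⟩
    have h1 : ((G i i : ℤ) : ℝ) = ((2 * m : ℤ) : ℝ) := by rw [hG]; push_cast; exact hm
    exact_mod_cast h1
  have hLmem : ∀ y, y ∈ L ↔ ∃ c : Fin l → ℤ, y = ∑ i, c i • b i := by
    intro y
    constructor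
    · intro hy
      rw [hLb] at hy
      induction hy using AddSubgroup.closure_induction with
      | mem z hz =>
          obtain ⟨i, rfl⟩ := hz
          exact ⟨fun j => if j = i then 1 else 0, by simp [ite_smul, Finset.sum_ite_eq']⟩
      | zero => exact ⟨0, by simp⟩
      | add z w _ _ hz hw =>
          obtain ⟨c₁, rfl⟩ := hz
          obtain ⟨c₂, rfl⟩ := hw
          exact ⟨c₁ + c₂, by simp [add_smul, Finset.sum_add_distrib]⟩
      | neg z _ hz =>
          obtain ⟨c, rfl⟩ := hz
          exact ⟨-c, by simp [neg_smul, ← Finset.sum_neg_distrib]⟩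
    · rintro ⟨c, rfl⟩
      exact AddSubgroup.sum_mem L (fun i _ => AddSubgroup.zsmul_mem L (hbL i) (c i))
  have hdualmem : ∀ x : EuclideanSpace ℝ (Fin l),
      x ∈ dual ↔ ∀ i, ∃ m : ℤ, d.repr x i = m := by
    intro x
    have hx : x ∈ dual ↔ ∀ y ∈ L, ∃ m : ℤ, (inner ℝ x y : ℝ) = m := by
      rw [← SetLike.mem_coe, hdual]; rfl
    rw [hx]
    constructor
    · intro h i
      obtain ⟨m, hm⟩ := h (b i) (hbL i)
      exact ⟨m, by rw [hd]; exact hm⟩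
    · intro h y hy
      obtain ⟨c, rfl⟩ := (hLmem y).1 hy
      choose m hm using h
      refine ⟨∑ i, c i * m i, ?_⟩
      rw [inner_sum]
      have hterm : ∀ i, (inner ℝ x (c i • b i) : ℝ) = (c i : ℝ) * ((m i : ℤ) : ℝ) := by
        intro i
        rw [← Int.cast_smul_eq_zsmul ℝ (c i) (b i), real_inner_smul_right, ← hd, hm]
      rw [Finset.sum_congr rfl (fun i _ => hterm i)]
      push_cast
      ring
  -- the coordinate map on the dual lattice
  set χf : ↥dual → (Fin l → ℤ) := fun x i => ⌊d.repr (x : EuclideanSpace ℝ (Fin l)) i⌋ with hχf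
  have hχ : ∀ (x : ↥dual) i, ((χf x i : ℤ) : ℝ) = d.repr (x : EuclideanSpace ℝ (Fin l)) i := by
    intro x i
    obtain ⟨m, hm⟩ := ((hdualmem x).1 x.2) i
    rw [hχf]; simp only [hm, Int.floor_intCast]
  have hχadd : ∀ x y, χf (x + y) = χf x + χf y := by
    intro x y
    funext i
    have h1 : ((χf (x + y) i : ℤ) : ℝ) = ((χf x i + χf y i : ℤ) : ℝ) := by
      rw [hχ (x + y) i]
      push_cast
      rw [hχ x i, hχ y i]
      simp [map_add]
    exact_mod_cast h1
  set χ : ↥dual →+ (Fin l → ℤ) :=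
    { toFun := χf
      map_zero' := by funext i; rw [hχf]; simp
      map_add' := hχadd } with hχdef
  have hχinj : Function.Injective χ := by
    intro x y h
    have h1 : ∀ i, d.repr (x : EuclideanSpace ℝ (Fin l)) i
        = d.repr (y : EuclideanSpace ℝ (Fin l)) i := by
      intro i
      rw [← hχ x i, ← hχ y i]
      exact_mod_cast congrFun h i
    have h2 : d.repr (x : EuclideanSpace ℝ (Fin l)) = d.repr (y : EuclideanSpace ℝ (Fin l)) :=
      Finsupp.ext h1
    exact Subtype.ext (d.repr.injective h2)
  have hsum_repr : ∀ c : Fin l → ℤ, ∀ i,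
      d.repr (∑ j, (c j : ℝ) • d j) i = (c i : ℝ) := by
    intro c i
    rw [map_sum]
    simp [Module.Basis.repr_self, Finsupp.single_apply, Finset.sum_ite_eq']
  have hχsurj : Function.Surjective χ := by
    intro c
    set x : EuclideanSpace ℝ (Fin l) := ∑ j, (c j : ℝ) • d j with hxdef
    have hxd : x ∈ dual := (hdualmem x).2 (fun i => ⟨c i, hsum_repr c i⟩)
    refine ⟨⟨x, hxd⟩, ?_⟩
    funext i
    have h1 : ((χf ⟨x, hxd⟩ i : ℤ) : ℝ) = ((c i : ℤ) : ℝ) := by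
      rw [hχ ⟨x, hxd⟩ i]
      exact hsum_repr c i
    exact_mod_cast h1
  set e : ↥dual ≃+ (Fin l → ℤ) := AddEquiv.ofBijective χ ⟨hχinj, hχsurj⟩ with hedef
  have hea : ∀ x : ↥dual, e x = χf x := fun x => rfl
  -- the image of `L` under the coordinate map
  have hkey : ∀ (x : EuclideanSpace ℝ (Fin l)) (hxd : x ∈ dual) (c : Fin l → ℤ)
      (_ : x = ∑ k, c k • b k), χf ⟨x, hxd⟩ = G.transpose.mulVec c := by
    intro x hxd c hx
    funext i
    have h1 : ((χf ⟨x, hxd⟩ i : ℤ) : ℝ) = (((G.transpose.mulVec c) i : ℤ) : ℝ) := by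
      rw [hχ ⟨x, hxd⟩ i]
      show d.repr x i = _
      rw [hd, hx, sum_inner]
      have hterm : ∀ k, (inner ℝ (c k • b k) (b i) : ℝ) = (c k : ℝ) * ((G k i : ℤ) : ℝ) := by
        intro k
        rw [← Int.cast_smul_eq_zsmul ℝ (c k) (b k), real_inner_smul_left, hG]
      rw [Finset.sum_congr rfl (fun k _ => hterm k)]
      rw [Matrix.mulVec]
      push_cast
      simp only [dotProduct, Matrix.transpose_apply]
      push_cast
      exact Finset.sum_congr rfl fun k _ => mul_comm _ _
    exact_mod_cast h1
  set H : AddSubgroup (Fin l → ℤ) :=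
    (LinearMap.range (Matrix.toLin' G.transpose)).toAddSubgroup with hHdef
  have hHmem : ∀ v, v ∈ H ↔ ∃ c, G.transpose.mulVec c = v := by
    intro v
    rw [hHdef]
    simp [LinearMap.mem_range, Matrix.toLin'_apply]
  have himg : AddSubgroup.map (e : ↥dual →+ (Fin l → ℤ)) (L.addSubgroupOf dual) = H := by
    ext v
    rw [AddSubgroup.mem_map, hHmem]
    constructor
    · rintro ⟨x, hxL, rfl⟩
      rw [AddSubgroup.mem_addSubgroupOf] at hxL
      obtain ⟨c, hc⟩ := (hLmem _).1 hxL
      refine ⟨c, ?_⟩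
      symm
      show χf x = _
      rw [show (x : ↥dual) = ⟨(x : EuclideanSpace ℝ (Fin l)), x.2⟩ from rfl]
      rw [hkey _ x.2 c hc]
    · rintro ⟨c, rfl⟩
      set x : EuclideanSpace ℝ (Fin l) := ∑ k, c k • b k with hxdef
      have hxL : x ∈ L := (hLmem x).2 ⟨c, rfl⟩
      have hxd : x ∈ dual := by
        rw [← SetLike.mem_coe, hdual]
        exact fun y hy => hint x hxL y hy
      refine ⟨⟨x, hxd⟩, ?_, ?_⟩
      · rw [AddSubgroup.mem_addSubgroupOf]; exact hxL
      · show χf ⟨x, hxd⟩ = _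
        rw [hkey x hxd c hxdef]
  have hquot : Nonempty ((↥dual ⧸ L.addSubgroupOf dual) ≃+ ((Fin l → ℤ) ⧸ H)) :=
    ⟨QuotientAddGroup.congr (L.addSubgroupOf dual) H e himg⟩
  haveI : NeZero N := ⟨hN.pos.ne'⟩
  have hidx : H.index = N ^ n := by
    rw [AddSubgroup.index_eq_card]
    obtain ⟨q⟩ := hquot
    obtain ⟨iso⟩ := hiso
    calc Nat.card ((Fin l → ℤ) ⧸ H)
        = Nat.card (↥dual ⧸ L.addSubgroupOf dual) := Nat.card_congr q.symm.toEquiv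
      _ = Nat.card (Fin n → ZMod N) := Nat.card_congr iso.toEquiv
      _ = N ^ n := by simp [Nat.card_pi, Nat.card_zmod]
  -- positivity of the Gram determinant
  set M₀ : Matrix (Fin l) (Fin l) ℝ := (PiLp.basisFun 2 ℝ (Fin l)).toMatrix ⇑b with hM₀def
  have hM₀ : ∀ k i, M₀ k i = b i k := by
    intro k i
    rw [hM₀def, Module.Basis.toMatrix_apply, PiLp.basisFun_repr]
  have hGram : G.map (fun z : ℤ => (z : ℝ)) = M₀.transpose * M₀ := by
    ext i j
    rw [Matrix.map_apply, hG, Matrix.mul_apply]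
    simp only [Matrix.transpose_apply, hM₀]
    rw [PiLp.inner_apply]
    simp
    exact Finset.sum_congr rfl fun _ _ => mul_comm _ _
  have hdetM₀ : M₀.det ≠ 0 := by
    letI := (PiLp.basisFun 2 ℝ (Fin l)).invertibleToMatrix b
    exact (Matrix.isUnit_det_of_invertible M₀).ne_zero
  have hGcastdet : ((G.det : ℤ) : ℝ) = (G.map (fun z : ℤ => (z : ℝ))).det := by
    have h := RingHom.map_det (Int.castRingHom ℝ) G
    simp only [Int.coe_castRingHom] at h
    exact h
  have hGpos : 0 < G.det := by
    have h1 : ((G.det : ℤ) : ℝ) = M₀.det ^ 2 := by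
      rw [hGcastdet, hGram, Matrix.det_mul, Matrix.det_transpose]
      ring
    have h2 : (0 : ℝ) < ((G.det : ℤ) : ℝ) := by
      rw [h1]
      positivity
    exact_mod_cast h2
  -- injectivity of the Gram map over ℤ
  have hdetR : ((G.map (fun z : ℤ => (z : ℝ))).transpose).det ≠ 0 := by
    rw [Matrix.det_transpose, ← hGcastdet]
    exact_mod_cast hGpos.ne'
  have hinj : Function.Injective (Matrix.toLin' G.transpose) := by
    intro v w hvw
    have h2 : G.transpose.mulVec v = G.transpose.mulVec w := by
      simpa [Matrix.toLin'_apply] using hvw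
    have h3 : (G.map (fun z : ℤ => (z : ℝ))).transpose.mulVec ((fun z : ℤ => (z : ℝ)) ∘ v)
        = (G.map (fun z : ℤ => (z : ℝ))).transpose.mulVec ((fun z : ℤ => (z : ℝ)) ∘ w) := by
      have hcomm : ∀ u : Fin l → ℤ,
          (G.map (fun z : ℤ => (z : ℝ))).transpose.mulVec ((fun z : ℤ => (z : ℝ)) ∘ u)
          = (fun z : ℤ => (z : ℝ)) ∘ (G.transpose.mulVec u) := by
        intro u
        funext i
        have h5 := (RingHom.map_mulVec (Int.castRingHom ℝ) G.transpose u i).symm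
        simp only [Int.coe_castRingHom] at h5
        rw [Function.comp_apply, ← Matrix.transpose_map]
        exact h5
      rw [hcomm, hcomm, h2]
    letI : Invertible (G.map (fun z : ℤ => (z : ℝ))).transpose :=
      Matrix.invertibleOfIsUnitDet _ (isUnit_iff_ne_zero.2 hdetR)
    have h4 := Matrix.mulVec_injective_of_invertible
      (G.map (fun z : ℤ => (z : ℝ))).transpose h3
    funext i
    have h6 := congrFun h4 i
    simp only [Function.comp_apply] at h6
    exact_mod_cast h6
  -- the Gram determinant equals N ^ n
  have hdetGn : G.det = ((N ^ n : ℕ) : ℤ) := by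
    have h1 := index_range_eq_natAbs_det (Matrix.toLin' G.transpose) hinj
    rw [show (LinearMap.range (Matrix.toLin' G.transpose)).toAddSubgroup = H from rfl] at h1
    rw [hidx] at h1
    rw [LinearMap.det_toLin', Matrix.det_transpose] at h1
    rw [← Int.natAbs_of_nonneg hGpos.le, ← h1]
  -- pass to ZMod 4
  set A4 : Matrix (Fin l) (Fin l) (ZMod 4) := G.map (fun z : ℤ => (z : ZMod 4)) with hA4def
  have hA4sym : ∀ i j, A4 i j = A4 j i := by
    intro i j
    rw [hA4def, Matrix.map_apply, Matrix.map_apply, hGsym]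
  have hA4diag : ∀ i, EvFour (A4 i i) := by
    intro i
    obtain ⟨m, hm⟩ := hGeven i
    have : A4 i i = 2 * (m : ZMod 4) := by
      rw [hA4def, Matrix.map_apply, hm]
      push_cast
      ring
    rw [this]
    exact evFour_two_mul _
  have hA4det : A4.det = ((N : ZMod 4)) ^ n := by
    have h : A4.det = ((G.det : ℤ) : ZMod 4) := by
      rw [hA4def]
      exact (RingHom.map_det (Int.castRingHom (ZMod 4)) G).symm
    rw [h, hdetGn]
    push_cast
    ring
  have hN4 : N % 4 = 1 ∨ N % 4 = 3 := by
    rw [Nat.odd_iff] at hNodd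
    omega
  have hcast : ((N : ℕ) : ZMod 4) = ((N % 4 : ℕ) : ZMod 4) := (ZMod.natCast_mod N 4).symm
  have hNunit : IsUnit ((N : ℕ) : ZMod 4) := by
    rcases hN4 with h | h
    · rw [hcast, h]; simp
    · rw [hcast, h]
      have : ((3 : ℕ) : ZMod 4) = -1 := by decide
      rw [this]
      exact isUnit_one.neg
  obtain ⟨hEl, hdet4⟩ := det_symm_even_diag l A4 hA4sym hA4diag (by rw [hA4det]; exact hNunit.pow n)
  refine ⟨hEl, ?_, ?_⟩
  · intro h1
    have hNe : ((N : ℕ) : ZMod 4) = 1 := by rw [hcast, h1]; simp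
    have hpow : ((-1 : ZMod 4)) ^ (l / 2) = 1 := by
      rw [← hdet4, hA4det, hNe, one_pow]
    have hev2 : Even (l / 2) := by
      by_contra hodd
      rw [Nat.not_even_iff_odd] at hodd
      rw [hodd.neg_one_pow] at hpow
      exact (by decide : (-1 : ZMod 4) ≠ 1) hpow
    obtain ⟨a, ha⟩ := hEl
    obtain ⟨c, hc⟩ := hev2
    omega
  · intro h3
    have hNe : ((N : ℕ) : ZMod 4) = -1 := by
      rw [hcast, h3]; decide
    have hpow : ((-1 : ZMod 4)) ^ n = (-1) ^ (l / 2) := by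
      rw [← hdet4, hA4det, hNe]
    rcases Nat.even_or_odd n with hn | hn <;> rcases Nat.even_or_odd (l / 2) with hl2 | hl2
    · rw [Nat.even_iff] at hn hl2; omega
    · exfalso
      rw [hn.neg_one_pow, hl2.neg_one_pow] at hpow
      exact (by decide : (1 : ZMod 4) ≠ -1) hpow
    · exfalso
      rw [hn.neg_one_pow, hl2.neg_one_pow] at hpow
      exact (by decide : (-1 : ZMod 4) ≠ 1) hpow
    · rw [Nat.odd_iff] at hn hl2; omega
end

section
/- Let M and N be positive integers with N ≥ 2, and let a : {1,…,M} × {1,…,N} → ℤ be an integer array all of whose entries are divisible by 4. Define Q(a) = (1/8)·∑_{m=1}^{M} ( ∑_{n=1}^{N} a(m,n)² − (1/N)·(∑_{n=1}^{N} a(m,n))² ). Then either every row of a is constant (so Q(a) = 0), or Q(a) ≥ 2(N−1)/N; in particular there is no such array with 0 < Q(a) ≤ 2(N−1)/(N+1). Moreover, if a has exactly q entries equal to 4 and N−q entries equal to 0 in one row (0 ≤ q ≤ N) and all other entries 0, then Q(a) = 2q(N−q)/N. -/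
/-- `Q(a) = (1/8)·∑_m ( ∑_n a(m,n)² − (1/N)(∑_n a(m,n))² )` for an integer array `a`. -/
noncomputable def Qval (M N : ℕ) (a : Fin M → Fin N → ℤ) : ℝ :=
  (1 / 8) * ∑ m : Fin M, ((∑ n : Fin N, (a m n : ℝ) ^ 2) -
    (1 / (N : ℝ)) * (∑ n : Fin N, (a m n : ℝ)) ^ 2)

lemma int_le_self_sq (a : ℤ) : a ≤ a ^ 2 := by
  rcases le_or_gt a 0 with h | h
  · nlinarith [sq_nonneg a]
  · nlinarith

lemma key (N : ℕ) (hN : 0 < N) (b : Fin N → ℤ)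
    (h : ∃ i j, b i ≠ b j) :
    (N : ℤ) - 1 ≤ (N : ℤ) * ∑ n, (b n) ^ 2 - (∑ n, b n) ^ 2 := by
  set s : ℤ := ∑ n, b n with hs
  set t : ℤ := s / N with ht
  set r : ℤ := s % N with hr
  have hNz : (N : ℤ) ≠ 0 := by exact_mod_cast hN.ne'
  have hNpos : (0:ℤ) < N := by exact_mod_cast hN
  have hrs : s = N * t + r := by rw [ht, hr]; exact (Int.mul_ediv_add_emod s N).symm
  have hr0 : 0 ≤ r := Int.emod_nonneg s hNz
  have hrN : r < N := Int.emod_lt_of_pos s hNpos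
  set c : Fin N → ℤ := fun n => b n - t with hc
  have hsumc : ∑ n, c n = r := by
    simp only [hc, Finset.sum_sub_distrib, Finset.sum_const, Finset.card_univ,
      Fintype.card_fin, nsmul_eq_mul, ← hs]
    linarith
  have hident : (N : ℤ) * ∑ n, (c n) ^ 2 - r ^ 2 = (N : ℤ) * ∑ n, (b n) ^ 2 - s ^ 2 := by
    have hterm : ∀ n : Fin N, (c n) ^ 2 = (b n) ^ 2 - 2 * t * b n + t ^ 2 := by
      intro n; simp only [hc]; ring
    have hexp : ∑ n, (c n) ^ 2 = ∑ n, (b n) ^ 2 - 2 * t * s + N * t ^ 2 := by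
      rw [Finset.sum_congr rfl (fun n _ => hterm n), Finset.sum_add_distrib,
        Finset.sum_sub_distrib, ← Finset.mul_sum, ← hs, Finset.sum_const,
        Finset.card_univ, Fintype.card_fin, nsmul_eq_mul]
    rw [hexp, hrs]; ring
  rw [← hident]
  have hcc : ∑ n, c n ≤ ∑ n, (c n) ^ 2 := Finset.sum_le_sum fun n _ => int_le_self_sq _
  rcases eq_or_lt_of_le hr0 with hr0' | hrpos
  · have hone : 1 ≤ ∑ n, (c n) ^ 2 := by
      by_contra hle
      push_neg at hle
      have h0 : ∑ n, (c n) ^ 2 = 0 :=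
        le_antisymm (by omega) (Finset.sum_nonneg fun n _ => sq_nonneg _)
      have hall := (Finset.sum_eq_zero_iff_of_nonneg (fun n _ => sq_nonneg (c n))).1 h0
      obtain ⟨i, j, hij⟩ := h
      have hi : c i = 0 := pow_eq_zero_iff (by norm_num) |>.1 (hall i (Finset.mem_univ i))
      have hj : c j = 0 := pow_eq_zero_iff (by norm_num) |>.1 (hall j (Finset.mem_univ j))
      apply hij
      have hi' : b i - t = 0 := hi
      have hj' : b j - t = 0 := hj
      omega
    have hr2 : r ^ 2 = 0 := by rw [← hr0']; ring
    have hmul := mul_le_mul_of_nonneg_left hone (le_of_lt hNpos)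
    linarith
  · have h1 : r ≤ ∑ n, (c n) ^ 2 := by rw [← hsumc]; exact hcc
    have h2 : (N : ℤ) * r ≤ (N : ℤ) * ∑ n, (c n) ^ 2 :=
      mul_le_mul_of_nonneg_left h1 (le_of_lt hNpos)
    have hprod : (0:ℤ) ≤ (r - 1) * ((N:ℤ) - 1 - r) :=
      mul_nonneg (by linarith) (by linarith)
    nlinarith

lemma Tnonneg (N : ℕ) (hN : 0 < N) (b : Fin N → ℤ) :
    0 ≤ (N : ℤ) * ∑ n, (b n) ^ 2 - (∑ n, b n) ^ 2 := by
  by_cases h : ∃ i j, b i ≠ b j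
  · have := key N hN b h
    have : (0:ℤ) ≤ (N:ℤ) - 1 := by
      have : (1:ℤ) ≤ N := by exact_mod_cast hN
      linarith
    linarith [key N hN b h]
  · push_neg at h
    have i0 : Fin N := ⟨0, hN⟩
    have h1 : ∑ n, b n = (N : ℤ) * b i0 := by
      rw [Finset.sum_congr rfl fun n _ => h n i0, Finset.sum_const, Finset.card_univ,
        Fintype.card_fin, nsmul_eq_mul]
    have h2 : ∑ n, (b n) ^ 2 = (N : ℤ) * (b i0) ^ 2 := by
      rw [Finset.sum_congr rfl fun n _ => by rw [h n i0], Finset.sum_const, Finset.card_univ,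
        Fintype.card_fin, nsmul_eq_mul]
    rw [h1, h2]
    have : (N:ℤ) * ((N:ℤ) * (b i0)^2) - ((N:ℤ) * b i0)^2 = 0 := by ring
    linarith

lemma Tconst (N : ℕ) (v : Fin N → ℤ) (h : ∀ n n', v n = v n') (i0 : Fin N) :
    (N : ℤ) * ∑ n, (v n) ^ 2 - (∑ n, v n) ^ 2 = 0 := by
  have h1 : ∑ n, v n = (N : ℤ) * v i0 := by
    rw [Finset.sum_congr rfl fun n _ => h n i0, Finset.sum_const, Finset.card_univ,
      Fintype.card_fin, nsmul_eq_mul]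
  have h2 : ∑ n, (v n) ^ 2 = (N : ℤ) * (v i0) ^ 2 := by
    rw [Finset.sum_congr rfl fun n _ => by rw [h n i0], Finset.sum_const, Finset.card_univ,
      Fintype.card_fin, nsmul_eq_mul]
  rw [h1, h2]; ring

lemma row_lb (N : ℕ) (hN : 0 < N) (v : Fin N → ℤ) (hdiv : ∀ n, (4:ℤ) ∣ v n)
    (h : ∃ n n', v n ≠ v n') :
    16 * ((N : ℤ) - 1) ≤ (N : ℤ) * ∑ n, (v n) ^ 2 - (∑ n, v n) ^ 2 := by
  set b : Fin N → ℤ := fun n => v n / 4 with hbdef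
  have hb : ∀ n, v n = 4 * b n := fun n => (Int.mul_ediv_cancel' (hdiv n)).symm
  have h1 : ∑ n, v n = 4 * ∑ n, b n := by
    rw [Finset.sum_congr rfl fun n _ => hb n, ← Finset.mul_sum]
  have h2 : ∑ n, (v n) ^ 2 = 16 * ∑ n, (b n) ^ 2 := by
    rw [Finset.sum_congr rfl fun n _ => show (v n) ^ 2 = 16 * (b n) ^ 2 by rw [hb n]; ring,
      ← Finset.mul_sum]
  have hbne : ∃ i j, b i ≠ b j := by
    obtain ⟨n, n', hnn⟩ := h
    exact ⟨n, n', fun he => hnn (by rw [hb n, hb n', he])⟩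
  have hk := key N hN b hbne
  rw [h1, h2]
  nlinarith

lemma Qval_eq (M N : ℕ) (hN : 0 < N) (a : Fin M → Fin N → ℤ) :
    Qval M N a = (1 / (8 * (N : ℝ))) *
      ∑ m, (((N : ℤ) * ∑ n, (a m n) ^ 2 - (∑ n, a m n) ^ 2 : ℤ) : ℝ) := by
  have hNz : (N : ℝ) ≠ 0 := Nat.cast_ne_zero.2 hN.ne'
  unfold Qval
  rw [Finset.mul_sum, Finset.mul_sum]
  refine Finset.sum_congr rfl fun m _ => ?_
  push_cast
  field_simp

/-- Let `a` be an integer `M × N` array (`N ≥ 2`) all of whose entries are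
divisible by `4`.  Then either every row of `a` is constant (so `Q(a) = 0`), or
`Q(a) ≥ 2(N−1)/N`; in particular there is no such array with `0 < Q(a) ≤ 2(N−1)/(N+1)`.
Moreover, if `a` has exactly `q` entries `4` and `N−q` entries `0` in one row and all other
entries `0`, then `Q(a) = 2q(N−q)/N`. -/
theorem Qval_gap_and_lambda_q
    (M N : ℕ) (hM : 0 < M) (hN : 2 ≤ N) (a : Fin M → Fin N → ℤ)
    (hdiv : ∀ m n, (4 : ℤ) ∣ a m n) :
    (((∀ m : Fin M, ∀ n n' : Fin N, a m n = a m n') ∧ Qval M N a = 0) ∨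
      2 * ((N : ℝ) - 1) / (N : ℝ) ≤ Qval M N a) ∧
    (¬ (0 < Qval M N a ∧ Qval M N a ≤ 2 * ((N : ℝ) - 1) / ((N : ℝ) + 1))) ∧
    (∀ (m₀ : Fin M) (q : ℕ), q ≤ N →
      (∃ S : Finset (Fin N), S.card = q ∧
        ∀ m n, a m n = if m = m₀ ∧ n ∈ S then 4 else 0) →
      Qval M N a = 2 * (q : ℝ) * ((N : ℝ) - (q : ℝ)) / (N : ℝ)) := by
  have hN0 : 0 < N := by omega
  have hNzR : (N : ℝ) ≠ 0 := Nat.cast_ne_zero.2 hN0.ne'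
  have hNR : (2 : ℝ) ≤ (N : ℝ) := by exact_mod_cast hN
  have hQ := Qval_eq M N hN0 a
  have gap : ((∀ m : Fin M, ∀ n n' : Fin N, a m n = a m n') ∧ Qval M N a = 0) ∨
      2 * ((N : ℝ) - 1) / (N : ℝ) ≤ Qval M N a := by
    by_cases hall : ∀ m : Fin M, ∀ n n' : Fin N, a m n = a m n'
    · left
      refine ⟨hall, ?_⟩
      rw [hQ]
      have hz : ∀ m : Fin M, ((N : ℤ) * ∑ n, (a m n) ^ 2 - (∑ n, a m n) ^ 2) = 0 :=
        fun m => Tconst N (a m) (hall m) ⟨0, hN0⟩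
      simp [hz]
    · right
      push_neg at hall
      obtain ⟨m, n, n', hm⟩ := hall
      have hrow := row_lb N hN0 (a m) (hdiv m) ⟨n, n', hm⟩
      have hsum : 16 * ((N : ℤ) - 1) ≤
          ∑ m', ((N : ℤ) * ∑ n, (a m' n) ^ 2 - (∑ n, a m' n) ^ 2) :=
        le_trans hrow (Finset.single_le_sum
          (fun i _ => Tnonneg N hN0 (a i)) (Finset.mem_univ m))
      have hsumR : 16 * ((N : ℝ) - 1) ≤
          ∑ m', (((N : ℤ) * ∑ n, (a m' n) ^ 2 - (∑ n, a m' n) ^ 2 : ℤ) : ℝ) := by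
        exact_mod_cast hsum
      rw [hQ]
      have h8 : (0 : ℝ) < 1 / (8 * (N : ℝ)) := by positivity
      have heq : 2 * ((N : ℝ) - 1) / (N : ℝ) = (1 / (8 * (N : ℝ))) * (16 * ((N : ℝ) - 1)) := by
        field_simp; ring
      rw [heq]
      exact mul_le_mul_of_nonneg_left hsumR h8.le
  refine ⟨gap, ?_, ?_⟩
  · rintro ⟨hp, hl⟩
    rcases gap with ⟨-, h0⟩ | hge
    · rw [h0] at hp; exact lt_irrefl _ hp
    · have hlt : 2 * ((N : ℝ) - 1) / ((N : ℝ) + 1) < 2 * ((N : ℝ) - 1) / (N : ℝ) :=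
        div_lt_div_of_pos_left (by linarith) (by linarith) (by linarith)
      linarith
  · rintro m₀ q hq ⟨S, hcard, hform⟩
    have hrowval : ∀ n : Fin N, (a m₀ n : ℝ) = if n ∈ S then 4 else 0 := by
      intro n; rw [hform]; by_cases h : n ∈ S <;> simp [h]
    have hrowsq : ∀ n : Fin N, (a m₀ n : ℝ) ^ 2 = if n ∈ S then 16 else 0 := by
      intro n; rw [hrowval]; by_cases h : n ∈ S <;> simp [h] <;> norm_num
    have hsum1 : ∑ n, (a m₀ n : ℝ) = 4 * q := by
      rw [Finset.sum_congr rfl fun n _ => hrowval n, Finset.sum_ite_mem,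
        Finset.univ_inter, Finset.sum_const, hcard, nsmul_eq_mul]
      ring
    have hsum2 : ∑ n, (a m₀ n : ℝ) ^ 2 = 16 * q := by
      rw [Finset.sum_congr rfl fun n _ => hrowsq n, Finset.sum_ite_mem,
        Finset.univ_inter, Finset.sum_const, hcard, nsmul_eq_mul]
      ring
    unfold Qval
    rw [Finset.sum_eq_single m₀ (fun m _ hm => by simp [hform, hm])
      (fun h => absurd (Finset.mem_univ m₀) h)]
    rw [hsum1, hsum2]
    field_simp
    ring
end

section
/- Let v_0, v_1, …, v_n be vectors in ℝ^n and let n_0 = 1, n_1, …, n_n be positive real numbers with ∑_{i=0}^{n} n_i·v_i = 0, and set h = ∑_{i=0}^{n} n_i. Then det(v_1 − v_0, v_2 − v_0, …, v_n − v_0) = h · det(v_1, v_2, …, v_n), and consequently the Lebesgue volume of the convex hull of {v_0, v_1, …, v_n} equals (h/n!) · |det(v_1, …, v_n)|. (This is the volume formula for the simplex spanned by the simple co-roots of an affine diagram, with marks n_i and dual Coxeter number h.) -/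
open MeasureTheory Set Pointwise

/-- The corner simplex in `ℝⁿ`. -/
def cornerSimplex (n : ℕ) : Set (Fin n → ℝ) :=
  {x | (∀ i, 0 ≤ x i) ∧ ∑ i, x i ≤ 1}

lemma measurableSet_cornerSimplex (n : ℕ) : MeasurableSet (cornerSimplex n) := by
  have h1 : MeasurableSet {x : Fin n → ℝ | ∀ i, 0 ≤ x i} := by
    rw [show {x : Fin n → ℝ | ∀ i, 0 ≤ x i} = ⋂ i, {x | 0 ≤ x i} by ext; simp]
    exact MeasurableSet.iInter fun i =>
      measurableSet_le measurable_const (measurable_pi_apply i)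
  have h2 : MeasurableSet {x : Fin n → ℝ | ∑ i, x i ≤ 1} :=
    measurableSet_le (by measurability) measurable_const
  exact h1.inter h2

lemma convex_cornerSimplex (n : ℕ) : Convex ℝ (cornerSimplex n) := by
  intro x hx y hy a b ha hb hab
  refine ⟨fun i => add_nonneg (mul_nonneg ha (hx.1 i)) (mul_nonneg hb (hy.1 i)), ?_⟩
  simp only [Pi.add_apply, Pi.smul_apply, smul_eq_mul, Finset.sum_add_distrib,
    ← Finset.mul_sum]
  calc a * ∑ i, x i + b * ∑ i, y i ≤ a * 1 + b * 1 := by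
        gcongr; exacts [hx.2, hy.2]
    _ = 1 := by linarith

lemma volume_cornerSimplex (n : ℕ) :
    volume (cornerSimplex n) = ENNReal.ofReal (1 / (Nat.factorial n : ℝ)) := by
  induction n with
  | zero =>
      have : cornerSimplex 0 = Set.univ := by
        ext x; simp [cornerSimplex]
      rw [this, MeasureTheory.volume_pi, Measure.pi_univ]
      simp
  | succ n ih =>
      have hmp := (measurePreserving_piFinSuccAbove
        (fun _ : Fin (n + 1) => (volume : Measure ℝ)) 0).symm
      set T : Set (ℝ × (Fin n → ℝ)) :=
        {p | 0 ≤ p.1 ∧ (∀ i, 0 ≤ p.2 i) ∧ p.1 + ∑ i, p.2 i ≤ 1} with hT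
      have hTpre : (MeasurableEquiv.piFinSuccAbove (fun _ : Fin (n+1) => ℝ) 0).symm ⁻¹' cornerSimplex (n+1) = T := by
        ext ⟨t, y⟩
        simp only [MeasurableEquiv.piFinSuccAbove_symm_apply, mem_preimage, cornerSimplex,
          mem_setOf_eq, hT]
        simp only [Fin.insertNthEquiv, Equiv.coe_fn_mk, Fin.insertNth_zero]
        constructor
        · rintro ⟨h0, hs⟩
          refine ⟨by simpa using h0 0, fun i => by simpa using h0 i.succ, ?_⟩
          rwa [Fin.sum_univ_succ, Fin.cons_zero] at hs
          -- need terms: Fin.cons_succ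
        · rintro ⟨ht, hy, hs⟩
          constructor
          · intro i
            refine Fin.cases ?_ ?_ i <;> simp [ht, hy]
          · rwa [Fin.sum_univ_succ, Fin.cons_zero]
      have hvol : volume (cornerSimplex (n + 1)) = (volume : Measure ℝ).prod volume T := by
        rw [← hTpre]
        have := hmp.measure_preimage (f := _)
          ((measurableSet_cornerSimplex (n+1)).nullMeasurableSet)
        -- hmp : MeasurePreserving e.symm (prod) (pi)
        simpa [MeasureTheory.volume_pi] using this.symm
      have hTm : MeasurableSet T := by
        have h1 : MeasurableSet {p : ℝ × (Fin n → ℝ) | 0 ≤ p.1} :=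
          measurableSet_le measurable_const measurable_fst
        have h2 : MeasurableSet {p : ℝ × (Fin n → ℝ) | ∀ i, 0 ≤ p.2 i} := by
          rw [show {p : ℝ × (Fin n → ℝ) | ∀ i, 0 ≤ p.2 i} = ⋂ i, {p | 0 ≤ p.2 i} by ext; simp]
          exact MeasurableSet.iInter fun i =>
            measurableSet_le measurable_const (by fun_prop)
        have h3 : MeasurableSet {p : ℝ × (Fin n → ℝ) | p.1 + ∑ i, p.2 i ≤ 1} := by
          refine measurableSet_le ?_ measurable_const
          exact measurable_fst.add (Finset.measurable_sum _ fun i _ => by fun_prop)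
        have hTe : T = {p : ℝ × (Fin n → ℝ) | 0 ≤ p.1} ∩
            ({p | ∀ i, 0 ≤ p.2 i} ∩ {p | p.1 + ∑ i, p.2 i ≤ 1}) := by
          ext p; simp [hT, and_assoc, mem_setOf_eq]
        rw [hTe]; exact h1.inter (h2.inter h3)
      have hslice : ∀ t : ℝ, t ≠ 1 → volume (Prod.mk t ⁻¹' T) =
          (Set.Ico (0:ℝ) 1).indicator
            (fun t => ENNReal.ofReal ((1-t)^n * (1 / (Nat.factorial n : ℝ)))) t := by
        intro t ht1
        by_cases ht : t ∈ Set.Ico (0:ℝ) 1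
        · have hr : (0:ℝ) < 1 - t := by simp only [Set.mem_Ico] at ht; linarith
          have hset : Prod.mk t ⁻¹' T = (1 - t) • cornerSimplex n := by
            ext y
            rw [Set.mem_smul_set_iff_inv_smul_mem₀ hr.ne']
            simp only [mem_preimage, hT, mem_setOf_eq, cornerSimplex, Pi.smul_apply,
              smul_eq_mul, ← Finset.mul_sum]
            constructor
            · rintro ⟨-, hy, hs⟩
              exact ⟨fun i => mul_nonneg (le_of_lt (inv_pos.2 hr)) (hy i),
                by rw [inv_mul_le_iff₀ hr, mul_one]; linarith⟩
            · rintro ⟨hy, hs⟩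
              have hy' : ∀ i, 0 ≤ y i := fun i => by
                have := hy i
                have := (mul_nonneg_iff_of_pos_left (inv_pos.2 hr)).1 (hy i)
                linarith
              refine ⟨ht.1, hy', ?_⟩
              rw [inv_mul_le_iff₀ hr, mul_one] at hs
              linarith
          rw [hset, Measure.addHaar_smul_of_nonneg volume hr.le, ih,
            Module.finrank_fintype_fun_eq_card, Fintype.card_fin,
            Set.indicator_of_mem ht, ← ENNReal.ofReal_mul (by positivity)]
        · have hset : Prod.mk t ⁻¹' T = ∅ := by
            ext y
            simp only [mem_preimage, hT, mem_setOf_eq, mem_empty_iff_false, iff_false]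
            rintro ⟨h0, hy, hs⟩
            have hsum : 0 ≤ ∑ i, y i := Finset.sum_nonneg fun i _ => hy i
            simp only [Set.mem_Ico, not_and, not_lt] at ht
            have := ht h0
            rcases lt_or_eq_of_le this with h | h
            · linarith
            · exact ht1 h.symm
          rw [hset, Set.indicator_of_notMem ht]
          simp
      have hae : (fun t => volume (Prod.mk t ⁻¹' T)) =ᵐ[volume]
          (Set.Ico (0:ℝ) 1).indicator
            (fun t => ENNReal.ofReal ((1-t)^n * (1 / (Nat.factorial n : ℝ)))) := by
        have h1 : (volume : Measure ℝ) {(1:ℝ)} = 0 := measure_singleton 1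
        rw [Filter.eventuallyEq_iff_exists_mem]
        exact ⟨{(1:ℝ)}ᶜ, compl_mem_ae_iff.2 h1, fun t ht => hslice t ht⟩
      have hint : IntegrableOn (fun t : ℝ => (1-t)^n * (1 / (Nat.factorial n : ℝ)))
          (Set.Ico (0:ℝ) 1) := by
        have : Continuous fun t : ℝ => (1-t)^n * (1 / (Nat.factorial n : ℝ)) := by continuity
        exact (this.integrableOn_Icc (a := 0) (b := 1)).mono_set Set.Ico_subset_Icc_self
      have hval : ∫ t in Set.Ico (0:ℝ) 1, (1-t)^n * (1 / (Nat.factorial n : ℝ)) =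
          1 / (Nat.factorial (n+1) : ℝ) := by
        rw [MeasureTheory.Measure.restrict_congr_set Ico_ae_eq_Ioc,
          ← intervalIntegral.integral_of_le zero_le_one]
        have h2 := intervalIntegral.integral_comp_sub_left (a := (0:ℝ)) (b := 1)
          (fun s : ℝ => s^n * (1 / (Nat.factorial n : ℝ))) 1
        simp only [sub_zero, sub_self] at h2
        rw [h2, intervalIntegral.integral_mul_const, integral_pow]
        simp only [one_pow, zero_pow, Nat.factorial_succ]
        push_cast
        field_simp
        simp
      rw [hvol, Measure.prod_apply hTm, lintegral_congr_ae hae,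
        lintegral_indicator measurableSet_Ico _,
        ← ofReal_integral_eq_lintegral_ofReal hint
          ((ae_restrict_iff' measurableSet_Ico).2 (Filter.Eventually.of_forall fun t ht =>
            mul_nonneg (pow_nonneg (by linarith [ht.2]) n) (by positivity))), hval]

/-- Let `v₀, v₁, …, vₙ ∈ ℝⁿ` and let `n₀ = 1, n₁, …, nₙ` be positive reals
with `∑ nᵢ vᵢ = 0`, and set `h = ∑ nᵢ`.  Then
`det(v₁−v₀, …, vₙ−v₀) = h·det(v₁, …, vₙ)`, and the Lebesgue volume of the convex hull of
`{v₀, …, vₙ}` equals `(h/n!)·|det(v₁, …, vₙ)|`. -/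
theorem affine_simplex_volume_formula
    (n : ℕ) (v : Fin (n + 1) → (Fin n → ℝ)) (c : Fin (n + 1) → ℝ)
    (hc0 : c 0 = 1) (hcpos : ∀ i, 0 < c i)
    (hsum : ∑ i, c i • v i = 0) :
    Matrix.det (Matrix.of fun i j : Fin n => v j.succ i - v 0 i) =
      (∑ i, c i) * Matrix.det (Matrix.of fun i j : Fin n => v j.succ i) ∧
    MeasureTheory.volume (convexHull ℝ (Set.range v)) =
      ENNReal.ofReal ((∑ i, c i) / (Nat.factorial n : ℝ) *
        |Matrix.det (Matrix.of fun i j : Fin n => v j.succ i)|) := by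
  set M : Matrix (Fin n) (Fin n) ℝ := Matrix.of fun i j : Fin n => v j.succ i - v 0 i with hM
  set N : Matrix (Fin n) (Fin n) ℝ := Matrix.of fun i j : Fin n => v j.succ i with hN
  have hneg : ∀ x : Fin n, ∑ k : Fin n, c k.succ * v k.succ x = - v 0 x := by
    intro x
    have h := congrFun hsum x
    simp only [Finset.sum_apply, Pi.smul_apply, smul_eq_mul, Pi.zero_apply,
      Fin.sum_univ_succ, hc0, one_mul] at h
    linarith
  -- Part 1
  have hdet : M.det = (∑ i, c i) * N.det := by
    have hB : M = N * (1 + Matrix.replicateCol (Fin 1) (fun k : Fin n => c k.succ) *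
        Matrix.replicateRow (Fin 1) (fun _ => (1:ℝ))) := by
      ext i j
      simp only [hM, hN, Matrix.of_apply, Matrix.mul_apply, Matrix.add_apply,
        Matrix.one_apply, Matrix.replicateCol_apply, Matrix.replicateRow_apply, mul_add,
        Finset.sum_add_distrib]
      simp only [mul_ite, mul_one, mul_zero]
      rw [Finset.sum_ite_eq' Finset.univ j fun k => v k.succ i]
      simp only [Finset.mem_univ, if_true]
      have h5 : ∑ x : Fin n, v x.succ i * ∑ _ : Fin 1, c x.succ =
          ∑ k : Fin n, c k.succ * v k.succ i := by
        apply Finset.sum_congr rfl; intro k _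
        simp [mul_comm]
      rw [h5, hneg i]
      ring
    rw [hB, Matrix.det_mul]; erw [Matrix.det_one_add_replicateCol_mul_replicateRow (ι := Fin 1)]
    have : dotProduct (fun _ : Fin n => (1:ℝ)) (fun k : Fin n => c k.succ) =
        ∑ k : Fin n, c k.succ := by
      simp [dotProduct]
    rw [this, Fin.sum_univ_succ, hc0]
    ring
  refine ⟨hdet, ?_⟩
  -- convex hull as affine image of corner simplex
  have hhull : convexHull ℝ (Set.range v) =
      (fun y => v 0 + Matrix.mulVec M y) '' cornerSimplex n := by
    apply Subset.antisymm
    · apply convexHull_min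
      · rintro _ ⟨i, rfl⟩
        refine Fin.cases ?_ ?_ i
        · exact ⟨0, ⟨fun _ => le_rfl, by simp⟩, by simp [Matrix.mulVec_zero]⟩
        · intro j
          refine ⟨Pi.single j 1, ⟨fun k => ?_, by simp⟩, ?_⟩
          · rcases eq_or_ne k j with h | h <;> simp [Pi.single_apply, h]
          · funext x
            simp only [Matrix.mulVec_single_one, Matrix.col_apply, mul_one, Pi.add_apply, hM, Matrix.of_apply]
            ring
      · have himg : (fun y => v 0 + Matrix.mulVec M y) '' cornerSimplex n =
            (fun z => v 0 + z) '' ((Matrix.toLin' M) '' cornerSimplex n) := by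
          rw [Set.image_image]
          simp [Matrix.toLin'_apply]
        rw [himg]
        exact ((convex_cornerSimplex n).linear_image _).translate _
    · rintro _ ⟨y, ⟨hy0, hy1⟩, rfl⟩
      set w : Fin (n+1) → ℝ := Fin.cons (1 - ∑ j, y j) y with hwdef
      have hw0 : ∀ i, 0 ≤ w i := by
        intro i
        refine Fin.cases ?_ ?_ i
        · simpa [hwdef] using sub_nonneg.2 hy1
        · intro j; simpa [hwdef] using hy0 j
      have hws : ∑ i, w i = 1 := by
        rw [Fin.sum_univ_succ]
        simp only [hwdef, Fin.cons_zero, Fin.cons_succ]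
        ring
      have hmem := Finset.univ.centerMass_mem_convexHull (w := w)
        (z := v) (fun i _ => hw0 i) (by rw [hws]; norm_num)
        (fun i _ => Set.mem_range_self i)
      rw [Finset.centerMass_eq_of_sum_1 _ _ hws] at hmem
      convert hmem using 1
      funext x
      rw [Fin.sum_univ_succ]
      simp only [Fin.cons_zero, Fin.cons_succ, Pi.add_apply, Pi.smul_apply, smul_eq_mul,
        Finset.sum_apply, Matrix.mulVec, dotProduct, hM, Matrix.of_apply]
      have : ∑ j, (v j.succ x - v 0 x) * y j =
          ∑ j, y j * v j.succ x - (∑ j, y j) * v 0 x := by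
        rw [Finset.sum_mul]
        rw [← Finset.sum_sub_distrib]
        apply Finset.sum_congr rfl; intro j _; ring
      rw [this]
      simp only [hwdef, Fin.cons_zero, Fin.cons_succ]
      ring_nf
  -- volume computation
  have himg : (fun y => v 0 + Matrix.mulVec M y) '' cornerSimplex n =
      (fun z => v 0 + z) '' ((Matrix.toLin' M) '' cornerSimplex n) := by
    rw [Set.image_image]
    simp [Matrix.toLin'_apply]
  rw [hhull, himg, Set.image_add_left, measure_preimage_add,
    MeasureTheory.Measure.addHaar_image_linearMap, LinearMap.det_toLin', volume_cornerSimplex,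
    ← ENNReal.ofReal_mul (abs_nonneg _)]
  congr 1
  have hpos : 0 < ∑ i, c i := Finset.sum_pos (fun i _ => hcpos i) ⟨0, Finset.mem_univ 0⟩
  rw [hdet, abs_mul, abs_of_pos hpos]
  ring
end
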